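/- arXiv:2001.06895 — 4 statements merged into one kernel-verified Lean document; each statement's English description precedes it below -/
import Mathlib

section
/- Let ρ : L∞(Ω, F, P) → L∞(Ω, G, P) be a conditional risk mapping (normalized, conditionally translation invariant, monotone) with respect to a sub-σ-algebra G ⊆ F. Then ρ satisfies conditional locality: for all Z, Z' ∈ L∞(F) and A ∈ G, ρ(1_A Z + 1_{A^c} Z') = 1_A ρ(Z) + 1_{A^c} ρ(Z') almost surely. -/
open MeasureTheory

/-- Key lemma: on a `G`-measurable set `A`, `ρ (1_A X)` agrees a.e. with `ρ X`. -/
theorem aux_local {Ω : Type*} (G : MeasurableSpace Ω) {m : MeasurableSpace Ω} (hG : G ≤ m)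
    (μ : Measure Ω)
    (ρ : (Ω → ℝ) → (Ω → ℝ))
    (htrans : ∀ Z Z' : Ω → ℝ, Measurable Z → (∃ C, ∀ ω, |Z ω| ≤ C) →
      Measurable[G] Z' → (∃ C, ∀ ω, |Z' ω| ≤ C) →
      ρ (Z + Z') =ᵐ[μ] Z' + ρ Z)
    (hmono : ∀ Z Z' : Ω → ℝ, Measurable Z → (∃ C, ∀ ω, |Z ω| ≤ C) →
      Measurable Z' → (∃ C, ∀ ω, |Z' ω| ≤ C) → Z ≤ᵐ[μ] Z' → ρ Z ≤ᵐ[μ] ρ Z')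
    (X : Ω → ℝ) (hX : Measurable X) (C : ℝ) (hC : ∀ ω, |X ω| ≤ C)
    (A : Set Ω) (hA : MeasurableSet[G] A) :
    A.indicator (ρ (A.indicator X)) =ᵐ[μ] A.indicator (ρ X) := by
  set f : Ω → ℝ := A.indicator X with hfdef
  have hf : Measurable f := hX.indicator (hG _ hA)
  have hfb : ∀ ω, |f ω| ≤ C := by
    intro ω
    by_cases h : ω ∈ A
    · simp [hfdef, Set.indicator_of_mem h, hC ω]
    · simpa [hfdef, Set.indicator_of_notMem h] using (abs_nonneg (X ω)).trans (hC ω)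
  set g : Ω → ℝ := Aᶜ.indicator (fun _ => C) with hgdef
  set g' : Ω → ℝ := Aᶜ.indicator (fun _ => -C) with hg'def
  have hg : Measurable[G] g := measurable_const.indicator hA.compl
  have hg' : Measurable[G] g' := measurable_const.indicator hA.compl
  have hgb : ∀ ω, |g ω| ≤ |C| := by
    intro ω
    by_cases h : ω ∈ Aᶜ
    · simp [hgdef, Set.indicator_of_mem h]
    · simp [hgdef, Set.indicator_of_notMem h]
  have hg'b : ∀ ω, |g' ω| ≤ |C| := by
    intro ω
    by_cases h : ω ∈ Aᶜ
    · simp [hg'def, Set.indicator_of_mem h]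
    · simp [hg'def, Set.indicator_of_notMem h]
  have hgm : Measurable g := hg.mono hG le_rfl
  have hg'm : Measurable g' := hg'.mono hG le_rfl
  -- upper bound: X ≤ f + g
  have hle1 : X ≤ᵐ[μ] f + g := by
    refine Filter.Eventually.of_forall fun ω => ?_
    by_cases h : ω ∈ A
    · simp [hfdef, hgdef, Set.indicator_of_mem h, Set.indicator_of_notMem (by simpa using h : ω ∉ Aᶜ)]
    · have : X ω ≤ C := (abs_le.mp (hC ω)).2
      simp [hfdef, hgdef, Set.indicator_of_notMem h, Set.indicator_of_mem (by simpa using h : ω ∈ Aᶜ), this]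
  -- lower bound: f + g' ≤ X
  have hle2 : f + g' ≤ᵐ[μ] X := by
    refine Filter.Eventually.of_forall fun ω => ?_
    by_cases h : ω ∈ A
    · simp [hfdef, hg'def, Set.indicator_of_mem h, Set.indicator_of_notMem (by simpa using h : ω ∉ Aᶜ)]
    · have : -C ≤ X ω := (abs_le.mp (hC ω)).1
      simp [hfdef, hg'def, Set.indicator_of_notMem h, Set.indicator_of_mem (by simpa using h : ω ∈ Aᶜ), this]
  have hfgb : ∀ ω, |(f + g) ω| ≤ C + |C| := fun ω =>
    (abs_add_le _ _).trans (add_le_add (hfb ω) (hgb ω))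
  have hfg'b : ∀ ω, |(f + g') ω| ≤ C + |C| := fun ω =>
    (abs_add_le _ _).trans (add_le_add (hfb ω) (hg'b ω))
  have h1 : ρ (f + g) =ᵐ[μ] g + ρ f := htrans f g hf ⟨C, hfb⟩ hg ⟨|C|, hgb⟩
  have h2 : ρ X ≤ᵐ[μ] ρ (f + g) :=
    hmono X (f + g) hX ⟨C, hC⟩ (hf.add hgm) ⟨C + |C|, hfgb⟩ hle1
  have h3 : ρ (f + g') =ᵐ[μ] g' + ρ f := htrans f g' hf ⟨C, hfb⟩ hg' ⟨|C|, hg'b⟩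
  have h4 : ρ (f + g') ≤ᵐ[μ] ρ X :=
    hmono (f + g') X (hf.add hg'm) ⟨C + |C|, hfg'b⟩ hX ⟨C, hC⟩ hle2
  have hup : ρ X ≤ᵐ[μ] g + ρ f := h2.trans h1.le
  have hdown : g' + ρ f ≤ᵐ[μ] ρ X := h3.symm.le.trans h4
  filter_upwards [hup, hdown] with ω hu hd
  by_cases h : ω ∈ A
  · have hg0 : g ω = 0 := Set.indicator_of_notMem (by simpa using h) _
    have hg'0 : g' ω = 0 := Set.indicator_of_notMem (by simpa using h) _
    have hu' : ρ X ω ≤ ρ f ω := by simpa [hg0] using hu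
    have hd' : ρ f ω ≤ ρ X ω := by simpa [hg'0] using hd
    simp [Set.indicator_of_mem h, le_antisymm hd' hu']
  · simp [Set.indicator_of_notMem h]

/-- Conditional locality of conditional risk mappings. -/
theorem stmt0 {Ω : Type*} (G : MeasurableSpace Ω) {m : MeasurableSpace Ω} (hG : G ≤ m)
    (μ : Measure Ω) [IsProbabilityMeasure μ]
    (ρ : (Ω → ℝ) → (Ω → ℝ))
    (hmeas : ∀ Z, Measurable[G] (ρ Z))
    (hnorm : ρ 0 =ᵐ[μ] 0)
    (htrans : ∀ Z Z' : Ω → ℝ, Measurable Z → (∃ C, ∀ ω, |Z ω| ≤ C) →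
      Measurable[G] Z' → (∃ C, ∀ ω, |Z' ω| ≤ C) →
      ρ (Z + Z') =ᵐ[μ] Z' + ρ Z)
    (hmono : ∀ Z Z' : Ω → ℝ, Measurable Z → (∃ C, ∀ ω, |Z ω| ≤ C) →
      Measurable Z' → (∃ C, ∀ ω, |Z' ω| ≤ C) → Z ≤ᵐ[μ] Z' → ρ Z ≤ᵐ[μ] ρ Z')
    (Z Z' : Ω → ℝ) (hZ : Measurable Z) (hZb : ∃ C, ∀ ω, |Z ω| ≤ C)
    (hZ' : Measurable Z') (hZ'b : ∃ C, ∀ ω, |Z' ω| ≤ C)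
    (A : Set Ω) (hA : MeasurableSet[G] A) :
    ρ (A.indicator Z + Aᶜ.indicator Z') =ᵐ[μ] A.indicator (ρ Z) + Aᶜ.indicator (ρ Z') := by
  obtain ⟨CZ, hCZ⟩ := hZb
  obtain ⟨CZ', hCZ'⟩ := hZ'b
  set W : Ω → ℝ := A.indicator Z + Aᶜ.indicator Z' with hWdef
  have hW : Measurable W := (hZ.indicator (hG _ hA)).add (hZ'.indicator (hG _ hA.compl))
  have hWb : ∀ ω, |W ω| ≤ max CZ CZ' := by
    intro ω
    by_cases h : ω ∈ A
    · have : W ω = Z ω := by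
        simp [hWdef, Set.indicator_of_mem h, Set.indicator_of_notMem (by simpa using h : ω ∉ Aᶜ)]
      rw [this]; exact (hCZ ω).trans (le_max_left _ _)
    · have : W ω = Z' ω := by
        simp [hWdef, Set.indicator_of_notMem h, Set.indicator_of_mem (by simpa using h : ω ∈ Aᶜ)]
      rw [this]; exact (hCZ' ω).trans (le_max_right _ _)
  -- restriction identities
  have hWA : A.indicator W = A.indicator Z := by
    funext ω
    by_cases h : ω ∈ A
    · simp [hWdef, Set.indicator_of_mem h, Set.indicator_of_notMem (by simpa using h : ω ∉ Aᶜ)]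
    · simp [Set.indicator_of_notMem h]
  have hWAc : Aᶜ.indicator W = Aᶜ.indicator Z' := by
    funext ω
    by_cases h : ω ∈ Aᶜ
    · simp [hWdef, Set.indicator_of_mem h, Set.indicator_of_notMem (by simpa using h : ω ∉ A)]
    · simp [Set.indicator_of_notMem h]
  have key1 : A.indicator (ρ W) =ᵐ[μ] A.indicator (ρ Z) := by
    have e1 := aux_local G hG μ ρ htrans hmono W hW (max CZ CZ') hWb A hA
    have e2 := aux_local G hG μ ρ htrans hmono Z hZ (max CZ CZ') (fun ω => (hCZ ω).trans (le_max_left _ _)) A hA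
    rw [hWA] at e1
    exact e1.symm.trans e2
  have key2 : Aᶜ.indicator (ρ W) =ᵐ[μ] Aᶜ.indicator (ρ Z') := by
    have e1 := aux_local G hG μ ρ htrans hmono W hW (max CZ CZ') hWb Aᶜ hA.compl
    have e2 := aux_local G hG μ ρ htrans hmono Z' hZ' (max CZ CZ') (fun ω => (hCZ' ω).trans (le_max_right _ _)) Aᶜ hA.compl
    rw [hWAc] at e1
    exact e1.symm.trans e2
  filter_upwards [key1, key2] with ω h1 h2
  have hsplit : ρ W ω = A.indicator (ρ W) ω + Aᶜ.indicator (ρ W) ω := by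
    by_cases h : ω ∈ A
    · simp [Set.indicator_of_mem h, Set.indicator_of_notMem (by simpa using h : ω ∉ Aᶜ)]
    · simp [Set.indicator_of_notMem h, Set.indicator_of_mem (by simpa using h : ω ∈ Aᶜ)]
  simp only [Pi.add_apply]
  rw [hsplit, h1, h2]
end

section
/- Let (Ω, F, P) be a probability space, λ ∈ (0,1), and Z a bounded measurable random variable. Let q be a λ-quantile of −Z, i.e. q = −VaR_λ(−Z) where VaR_λ(−Z) = inf{m : P(Z > m) ≤ λ}. Then AVaR_λ(−Z) := sup{E_Q[Z] : Q ≪ P, dQ/dP ≤ 1/λ} satisfies AVaR_λ(−Z) = (1/λ) E[(Z − VaR_λ(−Z))⁺] + VaR_λ(−Z). -/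
/-!
For an admissible `Q` with density `g = dQ/dP ∈ [0, 1/λ]`, `E_Q[Z] = E[g (Z - v)] + v` and
`g (Z - v) ≤ (Z - v)⁺ / λ`, which bounds the supremum. Equality holds for any density equal to `1/λ`
on `{Z > v}` and to `0` on `{Z < v}`; one with total mass one exists because the quantile `v`
satisfies `P(Z > v) ≤ λ ≤ P(Z ≥ v)`, so the missing mass can be spread over `{Z = v}`.
-/

open MeasureTheory Set
open scoped ENNReal

section Quantile

variable {Ω : Type*} [MeasurableSpace Ω] {μ : Measure Ω} {Z : Ω → ℝ} {c : ℝ≥0∞}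

lemma measure_lt_le_of_forall_gt {a : ℝ} (h : ∀ m, a < m → μ {ω | m < Z ω} ≤ c) :
    μ {ω | a < Z ω} ≤ c := by
  obtain ⟨u, hu_anti, hau, hu_lim⟩ := exists_seq_strictAnti_tendsto a
  have hunion : {ω | a < Z ω} = ⋃ n, {ω | u n < Z ω} := by
    ext ω
    simp only [mem_ofPred_eq, mem_iUnion]
    exact ⟨fun hω => (hu_lim.eventually (gt_mem_nhds hω)).exists,
      fun ⟨n, hn⟩ => (hau n).trans hn⟩
  have hmono : Monotone fun n => {ω | u n < Z ω} :=
    fun n m hnm ω hω => (hu_anti.antitone hnm).trans_lt hω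
  rw [hunion, hmono.measure_iUnion]
  exact iSup_le fun n => h _ (hau n)

lemma le_measure_le_of_forall_lt [IsFiniteMeasure μ] (hZ : Measurable Z) {a : ℝ}
    (h : ∀ m, m < a → c ≤ μ {ω | m < Z ω}) : c ≤ μ {ω | a ≤ Z ω} := by
  obtain ⟨u, hu_mono, hua, hu_lim⟩ := exists_seq_strictMono_tendsto a
  have hinter : {ω | a ≤ Z ω} = ⋂ n, {ω | u n < Z ω} := by
    ext ω
    simp only [mem_ofPred_eq, mem_iInter]
    refine ⟨fun hω n => (hua n).trans_le hω, fun hω => not_lt.1 fun hlt => ?_⟩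
    obtain ⟨n, hn⟩ := (hu_lim.eventually (lt_mem_nhds hlt)).exists
    exact (hω n).not_gt hn
  have hanti : Antitone fun n => {ω | u n < Z ω} :=
    fun n m hnm ω hω => (hu_mono.monotone hnm).trans_lt hω
  rw [hinter, hanti.measure_iInter
    (fun n => (measurableSet_lt measurable_const hZ).nullMeasurableSet) ⟨0, measure_ne_top _ _⟩]
  exact le_iInf fun n => h _ (hua n)

lemma nonempty_setOf_measure_lt_le {C : ℝ} (hC : ∀ ω, Z ω ≤ C) :
    {m | μ {ω | m < Z ω} ≤ c}.Nonempty :=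
  ⟨C, by simp [fun ω => not_lt.2 (hC ω)]⟩

lemma bddBelow_setOf_measure_lt_le (hc : c < μ univ) {C : ℝ} (hC : ∀ ω, C ≤ Z ω) :
    BddBelow {m | μ {ω | m < Z ω} ≤ c} := by
  refine ⟨C, fun m hm => not_lt.1 fun hmC => hc.not_ge ?_⟩
  simpa [fun ω => hmC.trans_le (hC ω)] using hm

variable {v : ℝ} (hv : v = sInf {m | μ {ω | m < Z ω} ≤ c})
include hv

lemma measure_lt_le_of_eq_csInf (hne : {m | μ {ω | m < Z ω} ≤ c}.Nonempty) :
    μ {ω | v < Z ω} ≤ c := by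
  refine measure_lt_le_of_forall_gt fun m hm => ?_
  obtain ⟨m', hm', hm'm⟩ := exists_lt_of_csInf_lt hne (hv ▸ hm)
  exact (measure_mono fun ω (hω : m < Z ω) => hm'm.le.trans_lt hω).trans hm'

lemma le_measure_le_of_eq_csInf [IsFiniteMeasure μ] (hZ : Measurable Z)
    (hbdd : BddBelow {m | μ {ω | m < Z ω} ≤ c}) : c ≤ μ {ω | v ≤ Z ω} :=
  le_measure_le_of_forall_lt hZ fun _ hm =>
    (not_le.1 fun hmc => (hv ▸ hm).not_ge (csInf_le hbdd hmc)).le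

end Quantile

section Density

variable {Ω : Type*} [MeasurableSpace Ω] {μ : Measure Ω} {g Z : Ω → ℝ} {K v : ℝ}

lemma integral_mul_eq_integral_mul_sub_add (hg : Integrable g μ)
    (hgZ : Integrable (fun ω => g ω * Z ω) μ) (hg1 : ∫ ω, g ω ∂μ = 1) :
    ∫ ω, g ω * Z ω ∂μ = ∫ ω, g ω * (Z ω - v) ∂μ + v := by
  have hsplit : (fun ω => g ω * (Z ω - v)) = fun ω => g ω * Z ω - v * g ω := by
    ext ω; ring
  rw [hsplit, integral_sub hgZ (hg.const_mul v), integral_const_mul, hg1]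
  ring

lemma isProbabilityMeasure_withDensity_ofReal (hg : Integrable g μ)
    (hg0 : 0 ≤ᵐ[μ] g) (hg1 : ∫ ω, g ω ∂μ = 1) :
    IsProbabilityMeasure (μ.withDensity fun ω => ENNReal.ofReal (g ω)) :=
  ⟨by rw [withDensity_apply _ MeasurableSet.univ, Measure.restrict_univ,
    ← ofReal_integral_eq_lintegral_ofReal hg hg0, hg1, ENNReal.ofReal_one]⟩

lemma integral_withDensity_ofReal (hg : Measurable g) (hg0 : ∀ ω, 0 ≤ g ω) :
    ∫ ω, Z ω ∂(μ.withDensity fun ω => ENNReal.ofReal (g ω)) = ∫ ω, g ω * Z ω ∂μ := by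
  rw [integral_withDensity_eq_integral_toReal_smul hg.ennreal_ofReal
    (ae_of_all _ fun _ => ENNReal.ofReal_lt_top)]
  simp only [ENNReal.toReal_ofReal (hg0 _), smul_eq_mul]

variable [IsFiniteMeasure μ]

lemma integral_mul_le_of_ae_le (hZ : Integrable Z μ) (hg : AEStronglyMeasurable g μ)
    (hg0 : ∀ᵐ ω ∂μ, 0 ≤ g ω) (hgK : ∀ᵐ ω ∂μ, g ω ≤ K) (hg1 : ∫ ω, g ω ∂μ = 1) :
    ∫ ω, g ω * Z ω ∂μ ≤ K * ∫ ω, max (Z ω - v) 0 ∂μ + v := by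
  have hgb : ∀ᵐ ω ∂μ, ‖g ω‖ ≤ K := by
    filter_upwards [hg0, hgK] with ω h0 hK
    rwa [Real.norm_of_nonneg h0]
  rw [integral_mul_eq_integral_mul_sub_add (v := v) (Integrable.of_bound hg K hgb)
    (hZ.bdd_mul hg hgb) hg1, ← integral_const_mul]
  refine add_le_add_left (integral_mono_ae ((hZ.sub (integrable_const v)).bdd_mul hg hgb)
    ((hZ.sub (integrable_const v)).pos_part.const_mul K) ?_) v
  filter_upwards [hg0, hgK] with ω h0 hK
  calc g ω * (Z ω - v) ≤ g ω * max (Z ω - v) 0 := by gcongr; exact le_max_left _ _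
    _ ≤ K * max (Z ω - v) 0 := by gcongr

lemma integral_mul_eq_of_mul_sub_eq (hZ : Integrable Z μ) (hg : AEStronglyMeasurable g μ)
    (hgb : ∀ᵐ ω ∂μ, ‖g ω‖ ≤ K) (hg1 : ∫ ω, g ω ∂μ = 1)
    (hgv : ∀ ω, g ω * (Z ω - v) = K * max (Z ω - v) 0) :
    ∫ ω, g ω * Z ω ∂μ = K * ∫ ω, max (Z ω - v) 0 ∂μ + v := by
  rw [integral_mul_eq_integral_mul_sub_add (v := v) (Integrable.of_bound hg K hgb)
    (hZ.bdd_mul hg hgb) hg1, ← integral_const_mul]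
  simp only [hgv]

lemma exists_randomized_indicator (hZ : Measurable Z) {l : ℝ}
    (hA : μ.real {ω | v < Z ω} ≤ l) (hB : l ≤ μ.real {ω | v ≤ Z ω}) :
    ∃ φ : Ω → ℝ, Measurable φ ∧ (∀ ω, φ ω ∈ Icc 0 1) ∧ ∫ ω, φ ω ∂μ = l ∧
      ∀ ω, φ ω * (Z ω - v) = max (Z ω - v) 0 := by
  set A := {ω | v < Z ω}
  set B := {ω | Z ω = v}
  have hAm : MeasurableSet A := measurableSet_lt measurable_const hZ
  have hBm : MeasurableSet B := hZ (measurableSet_singleton v)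
  have hAB : μ.real {ω | v ≤ Z ω} = μ.real A + μ.real B := by
    have hdisj : Disjoint A B := disjoint_left.2 fun ω (hA : v < Z ω) hB => hA.ne' hB
    rw [← measureReal_union hdisj hBm]
    congr 1
    ext ω
    simp [A, B, le_iff_lt_or_eq, eq_comm]
  -- if `μ.real B = 0` then `l = μ.real A`, and the junk value `κ = 0` is the right weight
  set κ := (l - μ.real A) / μ.real B
  have hκ : κ * μ.real B = l - μ.real A := div_mul_cancel_of_imp fun h => by linarith
  have hκ0 : 0 ≤ κ := div_nonneg (by linarith) measureReal_nonneg
  have hκ1 : κ ≤ 1 := div_le_one_of_le₀ (by linarith) measureReal_nonneg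
  refine ⟨fun ω => A.indicator (fun _ => 1) ω + B.indicator (fun _ => κ) ω,
    (measurable_const.indicator hAm).add (measurable_const.indicator hBm), fun ω => ?_, ?_,
    fun ω => ?_⟩
  · simp only [indicator_apply, mem_Icc, A, B, mem_ofPred_eq]
    split_ifs <;> constructor <;> linarith
  · rw [integral_add ((integrable_const _).indicator hAm) ((integrable_const _).indicator hBm),
      integral_indicator_const _ hAm, integral_indicator_const _ hBm, smul_eq_mul, smul_eq_mul]
    linarith
  · simp only [indicator_apply, A, B, mem_ofPred_eq]
    split_ifs with h1 h2 h2
    · linarith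
    · rw [max_eq_left (by linarith)]; ring
    · simp [h2]
    · rw [max_eq_right (by linarith [lt_of_le_of_ne (not_lt.1 h1) h2])]; ring

lemma integral_le_of_rnDeriv_le {K : ℝ} (hK : 0 ≤ K) {Q : Measure Ω} [IsProbabilityMeasure Q]
    (hQ : Q ≪ μ) (hQK : ∀ᵐ ω ∂μ, Q.rnDeriv μ ω ≤ ENNReal.ofReal K) (hZ : Integrable Z μ)
    (v : ℝ) : ∫ ω, Z ω ∂Q ≤ K * ∫ ω, max (Z ω - v) 0 ∂μ + v := by
  rw [← integral_rnDeriv_smul hQ]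
  exact integral_mul_le_of_ae_le hZ
    (Measure.measurable_rnDeriv Q μ).ennreal_toReal.aestronglyMeasurable
    (ae_of_all _ fun ω => ENNReal.toReal_nonneg)
    (hQK.mono fun ω h => ENNReal.toReal_le_of_le_ofReal hK h)
    (by simp [Measure.integral_toReal_rnDeriv hQ])

lemma exists_rnDeriv_le_integral_eq (hZ : Measurable Z) (hZi : Integrable Z μ) {l v : ℝ}
    (hl : 0 < l) (hA : μ.real {ω | v < Z ω} ≤ l) (hB : l ≤ μ.real {ω | v ≤ Z ω}) :
    ∃ Q : Measure Ω, IsProbabilityMeasure Q ∧ Q ≪ μ ∧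
      (∀ᵐ ω ∂μ, Q.rnDeriv μ ω ≤ ENNReal.ofReal (1 / l)) ∧
      ∫ ω, Z ω ∂Q = 1 / l * ∫ ω, max (Z ω - v) 0 ∂μ + v := by
  obtain ⟨φ, hφm, hφ01, hφl, hφv⟩ := exists_randomized_indicator hZ hA hB
  set g := fun ω => 1 / l * φ ω
  have hgm : Measurable g := hφm.const_mul _
  have hg0 : ∀ ω, 0 ≤ g ω := fun ω => mul_nonneg (by positivity) (hφ01 ω).1
  have hgK : ∀ ω, g ω ≤ 1 / l := fun ω =>
    mul_le_of_le_one_right (by positivity) (hφ01 ω).2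
  have hgb : ∀ᵐ ω ∂μ, ‖g ω‖ ≤ 1 / l :=
    ae_of_all _ fun ω => (Real.norm_of_nonneg (hg0 ω)).trans_le (hgK ω)
  have hg1 : ∫ ω, g ω ∂μ = 1 := by
    rw [integral_const_mul, hφl, one_div_mul_cancel hl.ne']
  refine ⟨μ.withDensity fun ω => ENNReal.ofReal (g ω),
    isProbabilityMeasure_withDensity_ofReal (Integrable.of_bound hgm.aestronglyMeasurable _ hgb)
      (ae_of_all _ hg0) hg1,
    withDensity_absolutelyContinuous _ _, ?_, ?_⟩
  · filter_upwards [Measure.rnDeriv_withDensity μ hgm.ennreal_ofReal] with ω hω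
    rw [hω]
    exact ENNReal.ofReal_le_ofReal (hgK ω)
  · rw [integral_withDensity_ofReal hgm hg0]
    exact integral_mul_eq_of_mul_sub_eq hZi hgm.aestronglyMeasurable hgb hg1
      fun ω => by rw [mul_assoc, hφv]

end Density

/-- The Rockafellar–Uryasev representation of Average Value at Risk. -/
theorem stmt8 {Ω : Type*} [MeasurableSpace Ω] (μ : Measure Ω) [IsProbabilityMeasure μ]
    (l : ℝ) (hl0 : 0 < l) (hl1 : l < 1)
    (Z : Ω → ℝ) (hZ : Measurable Z) (hZb : ∃ C, ∀ ω, |Z ω| ≤ C)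
    (v : ℝ) (hv : v = sInf {m : ℝ | μ {ω | m < Z ω} ≤ ENNReal.ofReal l}) :
    sSup {r : ℝ | ∃ Q : Measure Ω, IsProbabilityMeasure Q ∧ Q ≪ μ ∧
        (∀ᵐ ω ∂μ, Q.rnDeriv μ ω ≤ ENNReal.ofReal (1 / l)) ∧ r = ∫ ω, Z ω ∂Q}
      = (1 / l) * (∫ ω, max (Z ω - v) 0 ∂μ) + v := by
  obtain ⟨C, hC⟩ := hZb
  have hZi : Integrable Z μ :=
    Integrable.of_bound hZ.aestronglyMeasurable C (ae_of_all _ fun ω => hC ω)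
  have hne := nonempty_setOf_measure_lt_le (μ := μ) (c := ENNReal.ofReal l)
    fun ω => (le_abs_self _).trans (hC ω)
  have hbdd := bddBelow_setOf_measure_lt_le (μ := μ) (c := ENNReal.ofReal l)
    (by rw [measure_univ]; exact ENNReal.ofReal_lt_one.2 hl1) fun ω => neg_le_of_abs_le (hC ω)
  have hA : μ.real {ω | v < Z ω} ≤ l :=
    ENNReal.toReal_le_of_le_ofReal hl0.le (measure_lt_le_of_eq_csInf hv hne)
  have hB : l ≤ μ.real {ω | v ≤ Z ω} :=
    (ENNReal.ofReal_le_iff_le_toReal (measure_ne_top _ _)).1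
      (le_measure_le_of_eq_csInf hv hZ hbdd)
  obtain ⟨Q, hQ, hQμ, hQl, hQZ⟩ := exists_rnDeriv_le_integral_eq hZ hZi hl0 hA hB
  refine IsGreatest.csSup_eq ⟨⟨Q, hQ, hQμ, hQl, hQZ.symm⟩, ?_⟩
  rintro r ⟨Q', hQ', hQ'μ, hQ'l, rfl⟩
  exact integral_le_of_rnDeriv_le (by positivity) hQ'μ hQ'l hZi v
end

section
/- Let {ρ_t}_{t ∈ ℕ} be a dynamic conditional risk mapping on a filtered probability space that is time consistent, i.e. for all bounded Y, Z and t: ρ_{t+1}(Y) ≤ ρ_{t+1}(Z) a.s. implies ρ_t(Y) ≤ ρ_t(Z) a.s. Then the recursion ρ_s = ρ_s ∘ ρ_t holds for all 0 ≤ s ≤ t: ρ_s(Z) = ρ_s(ρ_t(Z)) a.s. for all bounded Z. -/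
/-!
Translation invariance of `ρ_t` with respect to `ℱ_t`, applied to `0 + ρ_t Z`, together with
normalization gives `ρ_t (ρ_t Z) = ρ_t Z`. Time consistency, used in both directions, pushes an
a.e. equality of `ρ_{t+1}`-values down to `ρ_t`, hence to every `ρ_s` with `s ≤ t`; applied to
`Z` and `ρ_t Z` this is the recursion.
-/

open MeasureTheory

section

variable {Ω : Type*} {m : MeasurableSpace Ω} {μ : Measure Ω}

theorem ae_eq_self_of_translationInvariant {ℱ : MeasurableSpace Ω} {R : (Ω → ℝ) → Ω → ℝ}
    (hnorm : R 0 =ᵐ[μ] 0)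
    (htrans : ∀ Z' : Ω → ℝ, Measurable[ℱ] Z' → (∃ C, ∀ ω, |Z' ω| ≤ C) →
      R (0 + Z') =ᵐ[μ] Z' + R 0)
    {Y : Ω → ℝ} (hY : Measurable[ℱ] Y) (hYb : ∃ C, ∀ ω, |Y ω| ≤ C) :
    R Y =ᵐ[μ] Y := by
  have h := htrans Y hY hYb
  rw [zero_add] at h
  filter_upwards [h, hnorm] with ω hω h0
  simp [hω, h0]

theorem ae_eq_of_ae_eq_of_timeConsistent {ρ : ℕ → (Ω → ℝ) → Ω → ℝ}
    (hTC : ∀ t (Y Z : Ω → ℝ), Measurable Y → (∃ C, ∀ ω, |Y ω| ≤ C) →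
      Measurable Z → (∃ C, ∀ ω, |Z ω| ≤ C) →
      ρ (t + 1) Y ≤ᵐ[μ] ρ (t + 1) Z → ρ t Y ≤ᵐ[μ] ρ t Z)
    {Y Z : Ω → ℝ} (hY : Measurable Y) (hYb : ∃ C, ∀ ω, |Y ω| ≤ C)
    (hZ : Measurable Z) (hZb : ∃ C, ∀ ω, |Z ω| ≤ C) {s t : ℕ} (hst : s ≤ t)
    (h : ρ t Y =ᵐ[μ] ρ t Z) : ρ s Y =ᵐ[μ] ρ s Z := by
  induction t, hst using Nat.le_induction with
  | base => exact h
  | succ t _ ih =>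
    exact ih ((hTC t Y Z hY hYb hZ hZb h.le).antisymm (hTC t Z Y hZ hZb hY hYb h.symm.le))

end

theorem stmt12_general {Ω : Type*} {m : MeasurableSpace Ω} (ℱ : ℕ → MeasurableSpace Ω)
    (hℱ : ∀ t, ℱ t ≤ m)
    (μ : Measure Ω)
    (ρ : ℕ → (Ω → ℝ) → (Ω → ℝ))
    (hmeas : ∀ t Z, Measurable[ℱ t] (ρ t Z))
    (hbdd : ∀ t (Z : Ω → ℝ), (∃ C, ∀ ω, |Z ω| ≤ C) → ∃ C, ∀ ω, |ρ t Z ω| ≤ C)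
    (hnorm : ∀ t, ρ t 0 =ᵐ[μ] 0)
    (htrans : ∀ t (Z Z' : Ω → ℝ), Measurable Z → (∃ C, ∀ ω, |Z ω| ≤ C) →
      Measurable[ℱ t] Z' → (∃ C, ∀ ω, |Z' ω| ≤ C) → ρ t (Z + Z') =ᵐ[μ] Z' + ρ t Z)
    (hTC : ∀ t (Y Z : Ω → ℝ), Measurable Y → (∃ C, ∀ ω, |Y ω| ≤ C) →
      Measurable Z → (∃ C, ∀ ω, |Z ω| ≤ C) →
      ρ (t + 1) Y ≤ᵐ[μ] ρ (t + 1) Z → ρ t Y ≤ᵐ[μ] ρ t Z) :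
    ∀ s t : ℕ, s ≤ t → ∀ Z : Ω → ℝ, Measurable Z → (∃ C, ∀ ω, |Z ω| ≤ C) →
      ρ s Z =ᵐ[μ] ρ s (ρ t Z) := by
  intro s t hst Z hZ hZb
  have hρZb := hbdd t Z hZb
  have hidem : ρ t (ρ t Z) =ᵐ[μ] ρ t Z :=
    ae_eq_self_of_translationInvariant (hnorm t)
      (htrans t 0 · measurable_zero ⟨0, by simp⟩) (hmeas t Z) hρZb
  exact ae_eq_of_ae_eq_of_timeConsistent hTC hZ hZb
    ((hmeas t Z).mono (hℱ t) le_rfl) hρZb hst hidem.symm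

/-- A time-consistent dynamic conditional risk mapping satisfies the recursion
`ρ_s = ρ_s ∘ ρ_t` for `s ≤ t`. -/
theorem stmt12 {Ω : Type*} {m : MeasurableSpace Ω} (ℱ : ℕ → MeasurableSpace Ω)
    (hℱ : ∀ t, ℱ t ≤ m)
    (μ : Measure Ω) [IsProbabilityMeasure μ]
    (ρ : ℕ → (Ω → ℝ) → (Ω → ℝ))
    (hmeas : ∀ t Z, Measurable[ℱ t] (ρ t Z))
    (hbdd : ∀ t (Z : Ω → ℝ), (∃ C, ∀ ω, |Z ω| ≤ C) → ∃ C, ∀ ω, |ρ t Z ω| ≤ C)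
    (hnorm : ∀ t, ρ t 0 =ᵐ[μ] 0)
    (htrans : ∀ t (Z Z' : Ω → ℝ), Measurable Z → (∃ C, ∀ ω, |Z ω| ≤ C) →
      Measurable[ℱ t] Z' → (∃ C, ∀ ω, |Z' ω| ≤ C) → ρ t (Z + Z') =ᵐ[μ] Z' + ρ t Z)
    (hmono : ∀ t (Z Z' : Ω → ℝ), Measurable Z → (∃ C, ∀ ω, |Z ω| ≤ C) →
      Measurable Z' → (∃ C, ∀ ω, |Z' ω| ≤ C) → Z ≤ᵐ[μ] Z' → ρ t Z ≤ᵐ[μ] ρ t Z')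
    (hTC : ∀ t (Y Z : Ω → ℝ), Measurable Y → (∃ C, ∀ ω, |Y ω| ≤ C) →
      Measurable Z → (∃ C, ∀ ω, |Z ω| ≤ C) →
      ρ (t + 1) Y ≤ᵐ[μ] ρ (t + 1) Z → ρ t Y ≤ᵐ[μ] ρ t Z) :
    ∀ s t : ℕ, s ≤ t → ∀ Z : Ω → ℝ, Measurable Z → (∃ C, ∀ ω, |Z ω| ≤ C) →
      ρ s Z =ᵐ[μ] ρ s (ρ t Z) :=
  stmt12_general ℱ hℱ μ ρ hmeas hbdd hnorm htrans hTC
end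

section
/- Let {ρ_t}_{t ∈ ℕ} be a dynamic conditional risk mapping and τ a finite stopping time. Define ρ_τ(Z) = Σ_t 1_{τ=t} ρ_t(Z). Then ρ_τ is a conditional risk mapping with respect to the stopped σ-algebra F_τ: ρ_τ(0) = 0, ρ_τ(Z + Z') = Z' + ρ_τ(Z) a.s. for bounded F_τ-measurable Z', and Z ≤ Z' a.s. implies ρ_τ(Z) ≤ ρ_τ(Z') a.s. -/
open MeasureTheory

lemma indicator_meas_aux {Ω : Type*} {m : MeasurableSpace Ω} {ℱ : Filtration ℕ m}
    {τ : Ω → ℕ} (hτ : IsStoppingTime ℱ (fun ω => (τ ω : WithTop ℕ))) {Z' : Ω → ℝ}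
    (hZ' : Measurable[hτ.measurableSpace] Z') (t : ℕ) :
    Measurable[ℱ t] (({ω | τ ω = t}).indicator Z') := by
  intro B hB
  rw [Set.indicator_preimage]
  apply MeasurableSet.union
  · have := (hτ.measurableSet_inter_eq_iff _ t).mp
      ((hZ' hB).inter (hτ.measurableSet_eq_of_countable' t))
    simpa using this
  · have := hτ.measurableSet_eq_of_countable t
    have h' : MeasurableSet[ℱ t] {ω | τ ω = t} := by simpa using this
    exact MeasurableSet.diff (measurable_const hB) h'

/-- For a finite stopping time `τ`, the mapping `ρ_τ(Z) = Σ_t 1_{τ=t} ρ_t(Z)` is a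
conditional risk mapping with respect to the stopped σ-algebra `F_τ`. -/
theorem stmt13 {Ω : Type*} {m : MeasurableSpace Ω} (ℱ : Filtration ℕ m)
    (μ : Measure Ω) [IsProbabilityMeasure μ]
    (τ : Ω → ℕ) (hτ : IsStoppingTime ℱ (fun ω => (τ ω : WithTop ℕ)))
    (ρ : ℕ → (Ω → ℝ) → (Ω → ℝ))
    (hmeas : ∀ t Z, Measurable[ℱ t] (ρ t Z))
    (hnorm : ∀ t, ρ t 0 =ᵐ[μ] 0)
    (htrans : ∀ t (Z Z' : Ω → ℝ), Measurable Z → (∃ C, ∀ ω, |Z ω| ≤ C) →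
      Measurable[ℱ t] Z' → (∃ C, ∀ ω, |Z' ω| ≤ C) → ρ t (Z + Z') =ᵐ[μ] Z' + ρ t Z)
    (hmono : ∀ t (Z Z' : Ω → ℝ), Measurable Z → (∃ C, ∀ ω, |Z ω| ≤ C) →
      Measurable Z' → (∃ C, ∀ ω, |Z' ω| ≤ C) → Z ≤ᵐ[μ] Z' → ρ t Z ≤ᵐ[μ] ρ t Z')
    (ρτ : (Ω → ℝ) → (Ω → ℝ))
    (hρτ : ∀ Z ω, ρτ Z ω = ρ (τ ω) Z ω) :
    ρτ 0 =ᵐ[μ] 0 ∧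
    (∀ Z Z' : Ω → ℝ, Measurable Z → (∃ C, ∀ ω, |Z ω| ≤ C) →
      Measurable[hτ.measurableSpace] Z' → (∃ C, ∀ ω, |Z' ω| ≤ C) →
      ρτ (Z + Z') =ᵐ[μ] Z' + ρτ Z) ∧
    (∀ Z Z' : Ω → ℝ, Measurable Z → (∃ C, ∀ ω, |Z ω| ≤ C) →
      Measurable Z' → (∃ C, ∀ ω, |Z' ω| ≤ C) → Z ≤ᵐ[μ] Z' → ρτ Z ≤ᵐ[μ] ρτ Z') := by
  refine ⟨?_, ?_, ?_⟩
  · have h : ∀ᵐ ω ∂μ, ∀ t, ρ t 0 ω = 0 := ae_all_iff.mpr fun t => hnorm t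
    filter_upwards [h] with ω hω
    simp only [hρτ, Pi.zero_apply] at *
    exact hω (τ ω)
  · intro Z Z' hZ hZb hZ' hZ'b
    obtain ⟨C, hCb⟩ := hZb
    obtain ⟨C', hC'b⟩ := hZ'b
    set D : ℝ := max C' 0 with hD
    have hDb : ∀ ω, |Z' ω| ≤ D := fun ω => (hC'b ω).trans (le_max_left _ _)
    have hD0 : 0 ≤ D := le_max_right _ _
    have hZ'm : Measurable Z' := hZ'.mono hτ.measurableSpace_le le_rfl
    have key : ∀ t : ℕ, ∀ᵐ ω ∂μ, τ ω = t → ρ t (Z + Z') ω = Z' ω + ρ t Z ω := by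
      intro t
      set A : Set Ω := {ω | τ ω = t} with hAdef
      have hA : MeasurableSet[ℱ t] A := by
        have := hτ.measurableSet_eq_of_countable t
        rw [hAdef]
        simpa using this
      set V : Ω → ℝ := A.indicator Z' with hVdef
      have hVmeas : Measurable[ℱ t] V := indicator_meas_aux hτ hZ' t
      have hVm : Measurable V := hVmeas.mono (ℱ.le t) le_rfl
      have hVb : ∀ ω, |V ω| ≤ D := by
        intro ω
        by_cases h : ω ∈ A
        · simpa [hVdef, Set.indicator_of_mem h] using hDb ω
        · simp [hVdef, Set.indicator_of_notMem h, hD0]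
      set U : Ω → ℝ := Aᶜ.indicator (fun _ => D) with hUdef
      set U' : Ω → ℝ := Aᶜ.indicator (fun _ => -D) with hU'def
      have hUmeas : Measurable[ℱ t] U :=
        (@measurable_const ℝ Ω _ (ℱ t) D).indicator hA.compl
      have hU'meas : Measurable[ℱ t] U' :=
        (@measurable_const ℝ Ω _ (ℱ t) (-D)).indicator hA.compl
      have hUm : Measurable U := hUmeas.mono (ℱ.le t) le_rfl
      have hU'm : Measurable U' := hU'meas.mono (ℱ.le t) le_rfl
      have hUb : ∀ ω, |U ω| ≤ D := by
        intro ω; by_cases h : ω ∈ Aᶜ <;>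
          simp [hUdef, Set.indicator_of_mem, Set.indicator_of_notMem, h, abs_of_nonneg hD0, hD0]
      have hU'b : ∀ ω, |U' ω| ≤ D := by
        intro ω; by_cases h : ω ∈ Aᶜ <;>
          simp [hU'def, Set.indicator_of_mem, Set.indicator_of_notMem, h,
            abs_of_nonneg hD0, hD0]
      have hZZ'b : ∀ ω, |(Z + Z') ω| ≤ C + D := fun ω =>
        (abs_add_le _ _).trans (add_le_add (hCb ω) (hDb ω))
      have h1 : ρ t (Z + V) =ᵐ[μ] V + ρ t Z :=
        htrans t Z V hZ ⟨C, hCb⟩ hVmeas ⟨D, hVb⟩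
      have h2 : ρ t ((Z + Z') + U) =ᵐ[μ] U + ρ t (Z + Z') :=
        htrans t (Z + Z') U (hZ.add hZ'm) ⟨C + D, hZZ'b⟩ hUmeas ⟨D, hUb⟩
      have h2' : ρ t ((Z + Z') + U') =ᵐ[μ] U' + ρ t (Z + Z') :=
        htrans t (Z + Z') U' (hZ.add hZ'm) ⟨C + D, hZZ'b⟩ hU'meas ⟨D, hU'b⟩
      have h3 : ρ t (Z + V) ≤ᵐ[μ] ρ t ((Z + Z') + U) := by
        refine hmono t _ _ (hZ.add hVm)
          ⟨C + D, fun ω => (abs_add_le _ _).trans (add_le_add (hCb ω) (hVb ω))⟩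
          ((hZ.add hZ'm).add hUm)
          ⟨C + D + D, fun ω => (abs_add_le _ _).trans (add_le_add (hZZ'b ω) (hUb ω))⟩
          (Filter.Eventually.of_forall fun ω => ?_)
        by_cases h : ω ∈ A
        · simp [hVdef, hUdef, Set.indicator_of_mem h,
            Set.indicator_of_notMem (Set.notMem_compl_iff.mpr h)]
        · have h1 : -D ≤ Z' ω := neg_le_of_abs_le (hDb ω)
          simp only [Pi.add_apply, hVdef, hUdef, Set.indicator_of_notMem h,
            Set.indicator_of_mem (Set.mem_compl h), add_zero]
          linarith
      have h3' : ρ t ((Z + Z') + U') ≤ᵐ[μ] ρ t (Z + V) := by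
        refine hmono t _ _ ((hZ.add hZ'm).add hU'm)
          ⟨C + D + D, fun ω => (abs_add_le _ _).trans (add_le_add (hZZ'b ω) (hU'b ω))⟩
          (hZ.add hVm)
          ⟨C + D, fun ω => (abs_add_le _ _).trans (add_le_add (hCb ω) (hVb ω))⟩
          (Filter.Eventually.of_forall fun ω => ?_)
        by_cases h : ω ∈ A
        · simp [hVdef, hU'def, Set.indicator_of_mem h,
            Set.indicator_of_notMem (Set.notMem_compl_iff.mpr h)]
        · have h1 : Z' ω ≤ D := le_of_abs_le (hDb ω)
          simp only [Pi.add_apply, hVdef, hU'def, Set.indicator_of_notMem h,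
            Set.indicator_of_mem (Set.mem_compl h), add_zero]
          linarith
      filter_upwards [h1, h2, h2', h3, h3'] with ω e1 e2 e2' i3 i3'
      intro hωt
      have hωA : ω ∈ A := hωt
      have hU0 : U ω = 0 := Set.indicator_of_notMem (Set.notMem_compl_iff.mpr hωA) _
      have hU'0 : U' ω = 0 := Set.indicator_of_notMem (Set.notMem_compl_iff.mpr hωA) _
      have hVZ' : V ω = Z' ω := Set.indicator_of_mem hωA _
      simp only [Pi.add_apply, hU0, hU'0, zero_add] at e2 e2'
      have : ρ t (Z + Z') ω = ρ t (Z + V) ω := le_antisymm (e2' ▸ i3') (e2 ▸ i3)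
      rw [this, e1, Pi.add_apply, hVZ']
    have hall : ∀ᵐ ω ∂μ, ∀ t, τ ω = t → ρ t (Z + Z') ω = Z' ω + ρ t Z ω :=
      ae_all_iff.mpr key
    filter_upwards [hall] with ω hω
    simp only [hρτ, Pi.add_apply]
    exact hω (τ ω) rfl
  · intro Z Z' hZ hZb hZ' hZ'b hle
    have h : ∀ᵐ ω ∂μ, ∀ t, ρ t Z ω ≤ ρ t Z' ω :=
      ae_all_iff.mpr fun t => hmono t Z Z' hZ hZb hZ' hZ'b hle
    filter_upwards [h] with ω hω
    simp only [hρτ]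
    exact hω (τ ω)
end
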